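/- arXiv:2404.15362 — 3 statements merged into one kernel-verified Lean document; each statement's English description precedes it below -/
import Mathlib

section
/- Let ε > 0 and let ⟨u_n⟩_{n=0}^∞ be an ε-monotone real sequence. Then there exists a non-decreasing real sequence ⟨v_n⟩_{n=0}^∞ such that |u_n − v_n| ≤ ε/2 holds for all n ∈ ℕ ∪ {0}. -/
/-- An `ε`-monotone real sequence can be approximated within `ε/2`
by a non-decreasing sequence. -/
theorem stmt_4 (ε : ℝ) (hε : 0 < ε) (u : ℕ → ℝ)
    (h : ∀ m n : ℕ, m < n → u m ≤ u n + ε) :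
    ∃ v : ℕ → ℝ, Monotone v ∧ ∀ n : ℕ, |u n - v n| ≤ ε / 2 := by
  refine ⟨fun n => (Finset.range (n+1)).sup' (by simp) u - ε / 2, ?_, ?_⟩
  · intro a b hab
    simp only [sub_le_sub_iff_right]
    exact Finset.sup'_mono u (by simpa using Nat.add_le_add_right hab 1) _
  · intro n
    rw [abs_sub_le_iff]; dsimp only
    constructor
    · have : u n ≤ (Finset.range (n+1)).sup' (by simp) u :=
        Finset.le_sup' u (by simp)
      linarith
    · obtain ⟨m, hm, hmax⟩ := Finset.exists_mem_eq_sup' (by simp : (Finset.range (n+1)).Nonempty) u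
      simp only [Finset.mem_range, Nat.lt_succ_iff] at hm
      rcases hm.lt_or_eq with hlt | rfl
      · have := h m n hlt
        simp only [hmax]; linarith
      · simp only [hmax]; linarith
end

section
/- Let ε > 0 and let ⟨u_n⟩_{n=0}^∞ be an ε-convex real sequence. Then there exists a continuous function f : [0,∞) → ℝ with f(n) = u_n for all n ∈ ℕ ∪ {0} which is ε-convex as a function, i.e., for all x, u, y ∈ [0,∞) with x < u < y, (f(u) − f(x))/(u − x) − ε/2 ≤ (f(y) − f(u))/(y − u) + ε/2. -/
noncomputable def pl (u : ℕ → ℝ) (x : ℝ) : ℝ :=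
  u ⌊x⌋₊ + (x - ⌊x⌋₊) * (u (⌊x⌋₊ + 1) - u ⌊x⌋₊)

lemma pl_nat (u : ℕ → ℝ) (n : ℕ) : pl u n = u n := by
  simp [pl]

lemma pl_eq_on (u : ℕ → ℝ) (n : ℕ) {x : ℝ} (h1 : (n : ℝ) ≤ x) (h2 : x ≤ n + 1) :
    pl u x = u n + (x - n) * (u (n + 1) - u n) := by
  rcases lt_or_eq_of_le h2 with h2 | h2
  · have hfl : ⌊x⌋₊ = n := by
      rw [Nat.floor_eq_iff (le_trans (Nat.cast_nonneg n) h1)]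
      exact ⟨h1, by push_cast; linarith⟩
    simp [pl, hfl]
  · subst h2
    have hfl : ⌊(n : ℝ) + 1⌋₊ = n + 1 := by
      rw [show ((n : ℝ) + 1) = ((n + 1 : ℕ) : ℝ) by push_cast; ring, Nat.floor_natCast]
    unfold pl
    rw [hfl]
    push_cast
    ring

lemma pl_neg (u : ℕ → ℝ) (x : ℝ) : pl (fun m => -(u m)) x = -(pl u x) := by
  simp [pl]; ring

lemma pl_upper (u : ℕ → ℝ) : ∀ n : ℕ, ∀ x y : ℝ, 0 ≤ x → x < y → y ≤ n →
    ∃ k : ℕ, ⌊x⌋₊ ≤ k ∧ (k : ℝ) ≤ y ∧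
      pl u y - pl u x ≤ (u (k + 1) - u k) * (y - x) := by
  intro n
  induction n with
  | zero =>
    intro x y hx hxy hyn
    exfalso
    push_cast at hyn
    linarith
  | succ n ih =>
    intro x y hx hxy hyn
    by_cases hy : y ≤ n
    · exact ih x y hx hxy hy
    push_neg at hy
    push_cast at hyn
    have hfy : pl u y = u n + (y - n) * (u (n + 1) - u n) := pl_eq_on u n hy.le hyn
    by_cases hxn : (n : ℝ) ≤ x
    · refine ⟨n, ?_, hy.le, ?_⟩
      · have hx1 : x < (n : ℝ) + 1 := lt_of_lt_of_le hxy hyn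
        have h2 : ⌊x⌋₊ < n + 1 := (Nat.floor_lt hx).2 (by push_cast; linarith)
        omega
      · have hfx : pl u x = u n + (x - n) * (u (n + 1) - u n) :=
          pl_eq_on u n hxn (by linarith)
        rw [hfx, hfy]; ring_nf; rfl
    · push_neg at hxn
      obtain ⟨k, hk1, hk2, hk3⟩ := ih x n hx hxn le_rfl
      have hfn : pl u (n : ℝ) = u n := pl_nat u n
      have hkn : k ≤ n := by exact_mod_cast hk2
      have hseg : pl u y - pl u (n : ℝ) = (u (n + 1) - u n) * (y - n) := by
        rw [hfy, hfn]; ring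
      by_cases hd : u (k + 1) - u k ≤ u (n + 1) - u n
      · refine ⟨n, le_trans hk1 hkn, hy.le, ?_⟩
        have h1 : pl u (n : ℝ) - pl u x ≤ (u (n + 1) - u n) * ((n : ℝ) - x) := by
          nlinarith
        nlinarith
      · push_neg at hd
        refine ⟨k, hk1, le_trans hk2 hy.le, ?_⟩
        nlinarith

lemma pl_lower (u : ℕ → ℝ) (n : ℕ) (x y : ℝ) (hx : 0 ≤ x) (hxy : x < y) (hyn : y ≤ n) :
    ∃ k : ℕ, ⌊x⌋₊ ≤ k ∧ (k : ℝ) ≤ y ∧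
      (u (k + 1) - u k) * (y - x) ≤ pl u y - pl u x := by
  obtain ⟨k, hk1, hk2, hk3⟩ := pl_upper (fun m => -(u m)) n x y hx hxy hyn
  rw [pl_neg, pl_neg] at hk3
  exact ⟨k, hk1, hk2, by nlinarith⟩

lemma pl_continuousOn (u : ℕ → ℝ) : ContinuousOn (pl u) (Set.Ici 0) := by
  have hIcc : ∀ n : ℕ, ContinuousOn (pl u) (Set.Icc (n : ℝ) (n + 1)) := by
    intro n
    have : ContinuousOn (fun x : ℝ => u n + (x - n) * (u (n + 1) - u n))
        (Set.Icc (n : ℝ) (n + 1)) := Continuous.continuousOn (by fun_prop)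
    exact this.congr fun x hx => pl_eq_on u n hx.1 hx.2
  intro a ha
  have ha0 : (0 : ℝ) ≤ a := ha
  obtain ⟨n, hna, han⟩ : ∃ n : ℕ, (n : ℝ) ≤ a ∧ a < n + 1 :=
    ⟨⌊a⌋₊, Nat.floor_le ha0, Nat.lt_floor_add_one a⟩
  rcases lt_or_eq_of_le hna with hlt | heq
  · -- interior of a piece : continuous at a
    have hev : (fun x : ℝ => u n + (x - n) * (u (n + 1) - u n)) =ᶠ[nhds a] pl u := by
      filter_upwards [Ioo_mem_nhds hlt han] with x hx
      exact (pl_eq_on u n hx.1.le hx.2.le).symm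
    have hca : ContinuousAt (pl u) a := by
      have hc : ContinuousAt (fun x : ℝ => u n + (x - n) * (u (n + 1) - u n)) a := by fun_prop
      exact hc.congr hev
    exact hca.continuousWithinAt
  · -- a is the natural number n
    rcases Nat.eq_zero_or_pos n with h0 | hpos
    · -- a = 0
      have ha' : a = 0 := by rw [← heq, h0]; norm_num
      have hmem : Set.Icc (0 : ℝ) 1 ∈ nhdsWithin a (Set.Ici 0) := by
        rw [ha']
        refine Filter.mem_of_superset
          (inter_mem_nhdsWithin _ (Iio_mem_nhds one_pos)) ?_
        intro t ht
        exact ⟨ht.1, ht.2.le⟩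
      have hc : ContinuousWithinAt (pl u) (Set.Icc (0 : ℝ) 1) a := by
        have h01 : a ∈ Set.Icc (0 : ℝ) 1 := by rw [ha']; norm_num
        have := hIcc 0 a (by simpa using h01)
        simpa using this
      exact hc.mono_of_mem_nhdsWithin hmem
    · -- a = n ≥ 1 : glue the two adjacent pieces
      obtain ⟨m, rfl⟩ : ∃ m, n = m + 1 := ⟨n - 1, by omega⟩
      set s := Set.Icc ((m : ℝ)) (m + 1) ∪ Set.Icc ((m : ℝ) + 1) (m + 2)
      have hc1 : ContinuousWithinAt (pl u) (Set.Icc ((m : ℝ)) (m + 1)) a :=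
        hIcc m a (by rw [← heq]; push_cast; constructor <;> linarith)
      have hc2 : ContinuousWithinAt (pl u) (Set.Icc ((m : ℝ) + 1) (m + 2)) a := by
        have := hIcc (m + 1) a (by rw [← heq]; push_cast; constructor <;> linarith)
        push_cast at this ⊢
        convert this using 2 <;> ring
      have hcu : ContinuousWithinAt (pl u) s a := hc1.union hc2
      have hmem : s ∈ nhdsWithin a (Set.Ici 0) := by
        apply mem_nhdsWithin_of_mem_nhds
        have hsub : Set.Ioo ((m : ℝ)) (m + 2) ⊆ s := by
          intro t ht
          rcases le_or_gt t ((m : ℝ) + 1) with h | h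
          · exact Or.inl ⟨ht.1.le, h⟩
          · exact Or.inr ⟨h.le, ht.2.le⟩
        refine Filter.mem_of_superset (Ioo_mem_nhds ?_ ?_) hsub <;>
          rw [← heq] <;> push_cast <;> linarith
      exact hcu.mono_of_mem_nhdsWithin hmem

/-- An `ε`-convex real sequence extends to a continuous function
on `[0, ∞)` which is `ε`-convex as a function. -/
theorem stmt_11 (ε : ℝ) (hε : 0 < ε) (u : ℕ → ℝ)
    (h : ∀ i j : ℕ, 1 ≤ i → i < j → u i - u (i - 1) ≤ u j - u (j - 1) + ε) :
    ∃ f : ℝ → ℝ, ContinuousOn f (Set.Ici 0) ∧ (∀ n : ℕ, f n = u n) ∧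
      ∀ x w y : ℝ, 0 ≤ x → x < w → w < y →
        (f w - f x) / (w - x) - ε / 2 ≤ (f y - f w) / (y - w) + ε / 2 := by
  refine ⟨pl u, pl_continuousOn u, pl_nat u, ?_⟩
  intro x w y hx hxw hwy
  have hw0 : (0 : ℝ) ≤ w := le_of_lt (lt_of_le_of_lt hx hxw)
  -- upper bound on the left slope
  obtain ⟨k1, hk11, hk12, hk13⟩ := pl_upper u (⌊w⌋₊ + 1) x w hx hxw
    (by push_cast; exact (Nat.lt_floor_add_one w).le)
  -- lower bound on the right slope
  obtain ⟨k2, hk21, hk22, hk23⟩ := pl_lower u (⌊y⌋₊ + 1) w y hw0 hwy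
    (by push_cast; exact (Nat.lt_floor_add_one y).le)
  have hk1w : k1 ≤ ⌊w⌋₊ := Nat.le_floor hk12
  have hk12' : k1 ≤ k2 := le_trans hk1w hk21
  have hdd : u (k1 + 1) - u k1 ≤ u (k2 + 1) - u k2 + ε := by
    rcases lt_or_eq_of_le hk12' with hlt | rfl
    · have := h (k1 + 1) (k2 + 1) (by omega) (by omega)
      simpa using this
    · linarith
  have h1 : (pl u w - pl u x) / (w - x) ≤ u (k1 + 1) - u k1 :=
    (div_le_iff₀ (by linarith)).2 hk13
  have h2 : u (k2 + 1) - u k2 ≤ (pl u y - pl u w) / (y - w) :=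
    (le_div_iff₀ (by linarith)).2 hk23
  linarith
end

section
/- Let ε > 0 and let ⟨u_n⟩_{n=0}^∞ be an ε-convex real sequence. Then there exists a convex real sequence ⟨v_n⟩_{n=0}^∞ such that the sequence ⟨u_n − v_n⟩_{n=0}^∞ is Lipschitz with Lipschitz modulus bounded above by ε, i.e., |(u_n − v_n) − (u_m − v_m)| ≤ ε·|n − m| for all natural numbers m, n. -/
/-- An `ε`-convex sequence is the sum of a convex sequence and a
Lipschitz sequence with Lipschitz modulus at most `ε`. -/
theorem stmt_12 (ε : ℝ) (hε : 0 < ε) (u : ℕ → ℝ)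
    (h : ∀ i j : ℕ, 1 ≤ i → i < j → u i - u (i - 1) ≤ u j - u (j - 1) + ε) :
    ∃ v : ℕ → ℝ, (∀ n : ℕ, 1 ≤ n → 2 * v n ≤ v (n - 1) + v (n + 1)) ∧
      ∀ m n : ℕ, |(u n - v n) - (u m - v m)| ≤ ε * |(n : ℝ) - (m : ℝ)| := by
  set e : ℕ → ℝ := fun k => u (k + 1) - u k with he
  have key : ∀ a b : ℕ, a ≤ b → e a ≤ e b + ε := by
    intro a b hab
    rcases eq_or_lt_of_le hab with rfl | hlt
    · simp [he]; linarith
    · have := h (a + 1) (b + 1) (by omega) (by omega)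
      simpa [he] using this
  have hbdd : ∀ k, BddBelow (Set.range fun j => e (k + j)) := by
    intro k
    refine ⟨e 0 - ε, ?_⟩
    rintro x ⟨j, rfl⟩
    have := key 0 (k + j) (Nat.zero_le _)
    linarith
  set c : ℕ → ℝ := fun k => sInf (Set.range fun j => e (k + j)) with hc
  have hc_le : ∀ k, c k ≤ e k := fun k => csInf_le (hbdd k) ⟨0, by simp⟩
  have hc_ge : ∀ k, e k - ε ≤ c k := by
    intro k
    apply le_csInf (Set.range_nonempty _)
    rintro x ⟨j, rfl⟩
    have := key k (k + j) (Nat.le_add_right _ _)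
    linarith
  have hc_mono : ∀ k, c k ≤ c (k + 1) := by
    intro k
    apply le_csInf (Set.range_nonempty _)
    rintro x ⟨j, rfl⟩
    exact csInf_le (hbdd k) ⟨j + 1, by show e (k + (j + 1)) = e (k + 1 + j); congr 1; omega⟩
  refine ⟨fun n => u 0 + ∑ i ∈ Finset.range n, c i, ?_, ?_⟩
  · intro n hn
    obtain ⟨m, rfl⟩ : ∃ m, n = m + 1 := ⟨n - 1, by omega⟩
    simp only [Nat.add_sub_cancel]
    rw [Finset.sum_range_succ, Finset.sum_range_succ (n := m + 1), Finset.sum_range_succ (n := m)]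
    have := hc_mono m
    linarith
  · set w : ℕ → ℝ := fun n => u n - (u 0 + ∑ i ∈ Finset.range n, c i) with hw
    have step : ∀ k, w k ≤ w (k + 1) ∧ w (k + 1) ≤ w k + ε := by
      intro k
      have h1 := hc_le k
      have h2 := hc_ge k
      constructor <;>
      · simp only [hw, Finset.sum_range_succ, he] at *
        linarith
    have main : ∀ m n : ℕ, m ≤ n → w m ≤ w n ∧ w n ≤ w m + ε * ((n : ℝ) - m) := by
      intro m n hmn
      induction n, hmn using Nat.le_induction with
      | base => simp
      | succ n hmn ih =>
        obtain ⟨s1, s2⟩ := step n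
        refine ⟨le_trans ih.1 s1, ?_⟩
        have : ((n : ℝ) + 1 - m) = ((n : ℝ) - m) + 1 := by ring
        push_cast
        rw [this, mul_add]
        linarith [ih.2]
    intro m n
    rcases le_total m n with hmn | hnm
    · obtain ⟨h1, h2⟩ := main m n hmn
      rw [abs_of_nonneg (by simpa [hw] using sub_nonneg.mpr h1),
        abs_of_nonneg (sub_nonneg.mpr (Nat.cast_le.mpr hmn))]
      simp only [hw] at h1 h2 ⊢
      linarith
    · obtain ⟨h1, h2⟩ := main n m hnm
      rw [abs_of_nonpos (by simpa [hw] using sub_nonpos.mpr h1),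
        abs_of_nonpos (sub_nonpos.mpr (Nat.cast_le.mpr hnm))]
      simp only [hw] at h1 h2 ⊢
      linarith
end
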